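/- Over all hyperbinary expansions of n, the digit sum ω is maximized exactly at the unique expansion with no 0 digits and minimized exactly at the binary expansion of n; moreover any expansion v of digit sum ω(v) can be reduced to the binary expansion by exactly ω(v) − ω(binary expansion of n) rewriting steps. -/

import Mathlib

/-- The integer represented by a word of digits (most significant first). -/
def hval (w : List ℕ) : ℕ := w.foldl (fun a d => 2 * a + d) 0

/-- `w` is a hyperbinary expansion of `n`: digits in {0,1,2}, nonzero leading
digit, representing `n`.  (The empty word is the unique expansion of `0`.) -/
def IsHyp (n : ℕ) (w : List ℕ) : Prop :=
  (∀ d ∈ w, d ≤ 2) ∧ w.head? ≠ some 0 ∧ hval w = n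

/-- `b n`: the number of hyperbinary expansions of `n` (so `b 0 = 1`). -/
noncomputable def hb (n : ℕ) : ℕ := Set.ncard {w : List ℕ | IsHyp n w}

/-- A single rewriting step: `02 → 10` or `12 → 20`, a leading `2` treated as `02`. -/
def Step (u v : List ℕ) : Prop :=
  (∃ x y : List ℕ, u = x ++ [0, 2] ++ y ∧ v = x ++ [1, 0] ++ y) ∨
  (∃ x y : List ℕ, u = x ++ [1, 2] ++ y ∧ v = x ++ [2, 0] ++ y) ∨
  (∃ y : List ℕ, u = 2 :: y ∧ v = 1 :: 0 :: y)

/-- Strict shortlex order: first by length, then lexicographically. -/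
def Shortlex (u v : List ℕ) : Prop :=
  u.length < v.length ∨ (u.length = v.length ∧ List.Lex (· < ·) u v)

/-- Number of maximal blocks of consecutive `2`'s in a word. -/
def blocks2 : List ℕ → ℕ
  | [] => 0
  | d :: rest => blocks2 rest + (if d = 2 ∧ rest.head? ≠ some 2 then 1 else 0)

/-!
A rewriting step preserves the value and lowers the digit sum by exactly one. The leftmost `2` of
an expansion is preceded by `0`, `1` or nothing, so it can always be rewritten: every expansion
reduces to one without `2`, i.e. to the binary expansion (by uniqueness of base-2 digits).
Dually, the leftmost `0` is preceded by `1` or `2`, so a step can always be undone: every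
expansion is reached from one without `0`, which is unique since its digits in `{1, 2}` are
forced by parity from the right. Counting digit sums along these two chains gives the extremal
values, their uniqueness, and the exact number of steps.
-/
lemma hval_eq_ofDigits_reverse (w : List ℕ) : hval w = Nat.ofDigits 2 w.reverse := by
  rw [hval, List.foldl_eq_foldr_reverse, Nat.ofDigits_eq_foldr]
  congr 1
  funext d a
  push_cast
  ring

@[simp]
lemma hval_nil : hval [] = 0 := rfl

lemma hval_append (u v : List ℕ) : hval (u ++ v) = hval u * 2 ^ v.length + hval v := by
  simp only [hval_eq_ofDigits_reverse, List.reverse_append, Nat.ofDigits_append,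
    List.length_reverse]
  ring

lemma hval_cons (d : ℕ) (w : List ℕ) : hval (d :: w) = d * 2 ^ w.length + hval w := by
  simpa [hval] using hval_append [d] w

lemma sum_le_hval (w : List ℕ) : w.sum ≤ hval w := by
  induction w with
  | nil => simp
  | cons d w ih =>
    rw [hval_cons, List.sum_cons]
    have : d ≤ d * 2 ^ w.length := Nat.le_mul_of_pos_right d (Nat.two_pow_pos _)
    omega

lemma eq_of_isHyp_of_two_notMem {n : ℕ} {u v : List ℕ} (hu : IsHyp n u) (hu2 : 2 ∉ u)
    (hv : IsHyp n v) (hv2 : 2 ∉ v) : u = v := by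
  have digits_hval : ∀ w, IsHyp n w → 2 ∉ w → Nat.digits 2 n = w.reverse := by
    rintro w ⟨hw, hw0, rfl⟩ hw2
    rw [hval_eq_ofDigits_reverse]
    refine Nat.digits_ofDigits 2 (by norm_num) _ (fun d hd => ?_) (fun hne => ?_)
    · have := hw d (List.mem_reverse.mp hd)
      have : d ≠ 2 := by rintro rfl; exact hw2 (List.mem_reverse.mp hd)
      omega
    · rw [List.getLast_reverse]
      intro h
      exact hw0 (by rw [List.head?_eq_some_head (by simpa using hne)]; exact congrArg some h)
  exact List.reverse_injective ((digits_hval u hu hu2).symm.trans (digits_hval v hv hv2))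

lemma eq_of_ofDigits_two_eq_of_one_two {u v : List ℕ} (hu : ∀ d ∈ u, d = 1 ∨ d = 2)
    (hv : ∀ d ∈ v, d = 1 ∨ d = 2) (h : Nat.ofDigits 2 u = Nat.ofDigits 2 v) : u = v := by
  induction u generalizing v with
  | nil =>
    cases v with
    | nil => rfl
    | cons b v =>
      have := hv b (by simp)
      simp only [Nat.ofDigits_nil, Nat.ofDigits_cons] at h
      omega
  | cons a u ih =>
    cases v with
    | nil =>
      have := hu a (by simp)
      simp only [Nat.ofDigits_cons, Nat.ofDigits_nil] at h
      omega
    | cons b v =>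
      have ha := hu a (by simp)
      have hb := hv b (by simp)
      simp only [Nat.ofDigits_cons] at h
      obtain ⟨rfl, htail⟩ : a = b ∧ Nat.ofDigits 2 u = Nat.ofDigits 2 v := by omega
      rw [ih (fun d hd => hu d (by simp [hd])) (fun d hd => hv d (by simp [hd])) htail]

lemma eq_of_isHyp_of_zero_notMem {n : ℕ} {u v : List ℕ} (hu : IsHyp n u) (hu0 : 0 ∉ u)
    (hv : IsHyp n v) (hv0 : 0 ∉ v) : u = v := by
  have one_two : ∀ w, IsHyp n w → 0 ∉ w → ∀ d ∈ w.reverse, d = 1 ∨ d = 2 := by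
    intro w hw hw0 d hd
    rw [List.mem_reverse] at hd
    have := hw.1 d hd
    have : d ≠ 0 := by rintro rfl; exact hw0 hd
    omega
  refine List.reverse_injective (eq_of_ofDigits_two_eq_of_one_two (one_two u hu hu0)
    (one_two v hv hv0) ?_)
  rw [← hval_eq_ofDigits_reverse, ← hval_eq_ofDigits_reverse, hu.2.2, hv.2.2]

namespace Step

variable {u v : List ℕ}

lemma hval_eq (h : Step u v) : hval u = hval v := by
  rcases h with ⟨x, y, rfl, rfl⟩ | ⟨x, y, rfl, rfl⟩ | ⟨y, rfl, rfl⟩ <;>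
    simp only [hval_append, hval_cons, hval_nil, List.length_cons, List.length_nil] <;> ring

lemma sum_eq (h : Step u v) : u.sum = v.sum + 1 := by
  rcases h with ⟨x, y, rfl, rfl⟩ | ⟨x, y, rfl, rfl⟩ | ⟨y, rfl, rfl⟩ <;>
    simp only [List.sum_append, List.sum_cons, List.sum_nil] <;> omega

lemma forall_le_two_iff (h : Step u v) : (∀ d ∈ u, d ≤ 2) ↔ ∀ d ∈ v, d ≤ 2 := by
  rcases h with ⟨x, y, rfl, rfl⟩ | ⟨x, y, rfl, rfl⟩ | ⟨y, rfl, rfl⟩ <;> simp [or_imp, forall_and]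

lemma isHyp_iff {n : ℕ} (h : Step u v) (hu : u.head? ≠ some 0) : IsHyp n u ↔ IsHyp n v := by
  have hv : v.head? ≠ some 0 := by
    rcases h with ⟨x, y, rfl, rfl⟩ | ⟨x, y, rfl, rfl⟩ | ⟨y, rfl, rfl⟩ <;>
      [cases x; cases x; skip] <;> simp_all
  rw [IsHyp, IsHyp, h.forall_le_two_iff, h.hval_eq]
  tauto

end Step

lemma exists_step_of_two_mem {n : ℕ} {w : List ℕ} (hw : IsHyp n w) (h2 : 2 ∈ w) :
    ∃ v, Step w v := by
  obtain ⟨x, y, hx, rfl, -⟩ := List.exists_erase_eq h2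
  rcases x.eq_nil_or_concat with rfl | ⟨x, p, rfl⟩
  · exact ⟨1 :: 0 :: y, Or.inr (Or.inr ⟨y, rfl, rfl⟩)⟩
  · rw [List.concat_eq_append] at hx ⊢
    have hp : p ≤ 2 := hw.1 p (by simp)
    have hp2 : p ≠ 2 := by rintro rfl; simp at hx
    obtain rfl | rfl : p = 0 ∨ p = 1 := by omega
    · exact ⟨x ++ [1, 0] ++ y, Or.inl ⟨x, y, by simp, rfl⟩⟩
    · exact ⟨x ++ [2, 0] ++ y, Or.inr (Or.inl ⟨x, y, by simp, rfl⟩)⟩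

lemma exists_step_to_of_zero_mem {n : ℕ} {w : List ℕ} (hw : IsHyp n w) (h0 : 0 ∈ w) :
    ∃ u, u.head? ≠ some 0 ∧ Step u w := by
  obtain ⟨x, y, hx, rfl, -⟩ := List.exists_erase_eq h0
  rcases x.eq_nil_or_concat with rfl | ⟨x, p, rfl⟩
  · simp [IsHyp] at hw
  · rw [List.concat_eq_append] at hx hw ⊢
    have hp : p ≤ 2 := hw.1 p (by simp)
    have hp0 : p ≠ 0 := by rintro rfl; simp at hx
    have hx0 : x.head? ≠ some 0 := by
      have := hw.2.1
      cases x <;> simp_all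
    obtain rfl | rfl : p = 1 ∨ p = 2 := by omega
    · rcases x with _ | ⟨c, x⟩
      · exact ⟨2 :: y, by simp, Or.inr (Or.inr ⟨y, rfl, rfl⟩)⟩
      · exact ⟨c :: x ++ [0, 2] ++ y, by simpa using hx0, Or.inl ⟨c :: x, y, rfl, by simp⟩⟩
    · refine ⟨x ++ [1, 2] ++ y, ?_, Or.inr (Or.inl ⟨x, y, rfl, by simp⟩)⟩
      cases x <;> simp_all

theorem Relation.ReflTransGen.exists_path_of_forall_eq_succ {α : Type*} {r : α → α → Prop}
    (φ : α → ℕ) (hφ : ∀ a b, r a b → φ a = φ b + 1) {a b : α} (h : Relation.ReflTransGen r a b) :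
    ∃ k, φ a = φ b + k ∧ ∃ f : ℕ → α, f 0 = a ∧ f k = b ∧ ∀ i < k, r (f i) (f (i + 1)) := by
  induction h using Relation.ReflTransGen.head_induction_on with
  | refl => exact ⟨0, rfl, fun _ => b, rfl, rfl, by simp⟩
  | @head a c hac _ ih =>
    obtain ⟨k, hk, f, hf0, hfk, hf⟩ := ih
    refine ⟨k + 1, by rw [hφ a c hac, hk, add_assoc], fun | 0 => a | i + 1 => f i, rfl, hfk, ?_⟩
    rintro (_ | i) hi
    · simpa [hf0] using hac
    · exact hf i (by omega)

lemma reflTransGen_step_of_two_notMem {n : ℕ} {w bin : List ℕ} (hw : IsHyp n w)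
    (hbin : IsHyp n bin) (hbin2 : 2 ∉ bin) : Relation.ReflTransGen Step w bin := by
  induction hs : w.sum using Nat.strong_induction_on generalizing w with
  | _ s ih =>
    by_cases h2 : 2 ∈ w
    · obtain ⟨v, hwv⟩ := exists_step_of_two_mem hw h2
      have hv : IsHyp n v := (hwv.isHyp_iff hw.2.1).1 hw
      exact .head hwv (ih _ (by have := hwv.sum_eq; omega) hv rfl)
    · rw [eq_of_isHyp_of_two_notMem hw h2 hbin hbin2]

lemma reflTransGen_step_of_zero_notMem {n : ℕ} {mhe w : List ℕ} (hmhe : IsHyp n mhe)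
    (hmhe0 : 0 ∉ mhe) (hw : IsHyp n w) : Relation.ReflTransGen Step mhe w := by
  induction hs : n - w.sum using Nat.strong_induction_on generalizing w with
  | _ s ih =>
    by_cases h0 : 0 ∈ w
    · obtain ⟨u, hu0, huw⟩ := exists_step_to_of_zero_mem hw h0
      have hu : IsHyp n u := (huw.isHyp_iff hu0).2 hw
      have hun : u.sum ≤ n := hu.2.2 ▸ sum_le_hval u
      exact .tail (ih _ (by have := huw.sum_eq; omega) hu rfl) huw
    · rw [eq_of_isHyp_of_zero_notMem hmhe hmhe0 hw h0]

theorem stmt17_general (n : ℕ) (bin mhe : List ℕ)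
    (hbin : IsHyp n bin) (hbin2 : 2 ∉ bin)
    (hmhe : IsHyp n mhe) (hmhe0 : 0 ∉ mhe) :
    (∀ w : List ℕ, IsHyp n w → bin.sum ≤ w.sum ∧ w.sum ≤ mhe.sum) ∧
    (∀ w : List ℕ, IsHyp n w → w.sum = mhe.sum → w = mhe) ∧
    (∀ w : List ℕ, IsHyp n w → w.sum = bin.sum → w = bin) ∧
    (∀ w : List ℕ, IsHyp n w → ∃ f : ℕ → List ℕ,
      f 0 = w ∧ f (w.sum - bin.sum) = bin ∧
      ∀ i < w.sum - bin.sum, Step (f i) (f (i + 1))) := by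
  have sum_step : ∀ u v, Step u v → u.sum = v.sum + 1 := fun _ _ h => h.sum_eq
  have to_bin := fun w (hw : IsHyp n w) ↦
    (reflTransGen_step_of_two_notMem hw hbin hbin2).exists_path_of_forall_eq_succ _ sum_step
  have from_mhe := fun w (hw : IsHyp n w) ↦
    (reflTransGen_step_of_zero_notMem hmhe hmhe0 hw).exists_path_of_forall_eq_succ _ sum_step
  refine ⟨fun w hw => ?_, fun w hw hsum => ?_, fun w hw hsum => ?_, fun w hw => ?_⟩
  · obtain ⟨k, hk, -⟩ := to_bin w hw
    obtain ⟨l, hl, -⟩ := from_mhe w hw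
    omega
  · obtain ⟨k, hk, f, hf0, hfk, -⟩ := from_mhe w hw
    obtain rfl : k = 0 := by omega
    exact hfk.symm.trans hf0
  · obtain ⟨k, hk, f, hf0, hfk, -⟩ := to_bin w hw
    obtain rfl : k = 0 := by omega
    exact hf0.symm.trans hfk
  · obtain ⟨k, hk, path⟩ := to_bin w hw
    rwa [show w.sum - bin.sum = k by omega]

theorem stmt17 (n : ℕ) (hn : 0 < n) (bin mhe : List ℕ)
    (hbin : IsHyp n bin) (hbin2 : 2 ∉ bin)
    (hmhe : IsHyp n mhe) (hmhe0 : 0 ∉ mhe) :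
    (∀ w : List ℕ, IsHyp n w → bin.sum ≤ w.sum ∧ w.sum ≤ mhe.sum) ∧
    (∀ w : List ℕ, IsHyp n w → w.sum = mhe.sum → w = mhe) ∧
    (∀ w : List ℕ, IsHyp n w → w.sum = bin.sum → w = bin) ∧
    (∀ w : List ℕ, IsHyp n w → ∃ f : ℕ → List ℕ,
      f 0 = w ∧ f (w.sum - bin.sum) = bin ∧
      ∀ i < w.sum - bin.sum, Step (f i) (f (i + 1))) :=
  stmt17_general n bin mhe hbin hbin2 hmhe hmhe0
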